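/- arXiv:1201.2427 — 2 statements merged into one kernel-verified Lean document; each statement's English description precedes it below -/
import Mathlib

section
/- Let k be a field and n ≥ 1, and consider the polynomial ring k[z₁, z₂, w₁, …, wₙ, u₁, …, uₙ]. Then the ideal I generated by the 2n elements {z₁·wᵢ : 1 ≤ i ≤ n} ∪ {z₂·uⱼ : 1 ≤ j ≤ n} equals the intersection of the four ideals (z₁, z₂), (z₁, u₁, …, uₙ), (z₂, w₁, …, wₙ), and (w₁, …, wₙ, u₁, …, uₙ). -/
open MvPolynomial

/-- The variables `z₁, z₂` of the ring `k[z₁, z₂, w₁, …, wₙ, u₁, …, uₙ]`. -/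
noncomputable def zVar {k : Type*} [Field k] (n : ℕ) (s : Fin 2) :
    MvPolynomial (Fin 2 ⊕ (Fin n ⊕ Fin n)) k :=
  X (Sum.inl s)

/-- The variables `w₁, …, wₙ`. -/
noncomputable def wVar {k : Type*} [Field k] (n : ℕ) (i : Fin n) :
    MvPolynomial (Fin 2 ⊕ (Fin n ⊕ Fin n)) k :=
  X (Sum.inr (Sum.inl i))

/-- The variables `u₁, …, uₙ`. -/
noncomputable def uVar {k : Type*} [Field k] (n : ℕ) (j : Fin n) :
    MvPolynomial (Fin 2 ⊕ (Fin n ⊕ Fin n)) k :=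
  X (Sum.inr (Sum.inr j))

lemma pair_le_iff {σ : Type*} [DecidableEq σ] {a b : σ} (hab : a ≠ b) (m : σ →₀ ℕ) :
    Finsupp.single a 1 + Finsupp.single b 1 ≤ m ↔ m a ≠ 0 ∧ m b ≠ 0 := by
  rw [Finsupp.le_def]
  constructor
  · intro h
    constructor
    · have := h a; simp [Finsupp.single_apply, hab.symm] at this; omega
    · have := h b; simp [Finsupp.single_apply, hab] at this; omega
  · rintro ⟨h1, h2⟩ i
    simp only [Finsupp.add_apply, Finsupp.single_apply]
    by_cases hia : a = i <;> by_cases hib : b = i <;> simp_all <;> omega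

/-- In `k[z₁, z₂, w₁, …, wₙ, u₁, …, uₙ]` (`n ≥ 1`), the ideal
generated by `{z₁ wᵢ} ∪ {z₂ uⱼ}` equals the intersection of the four ideals
`(z₁, z₂)`, `(z₁, u₁, …, uₙ)`, `(z₂, w₁, …, wₙ)` and `(w₁, …, wₙ, u₁, …, uₙ)`. -/
theorem normal_crossing_ideal_decomposition {k : Type*} [Field k] (n : ℕ) (hn : 1 ≤ n) :
    Ideal.span ((Set.range fun i : Fin n => zVar (k := k) n 0 * wVar n i) ∪
        (Set.range fun j : Fin n => zVar (k := k) n 1 * uVar n j)) =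
      Ideal.span {zVar (k := k) n 0, zVar n 1} ⊓
      Ideal.span ({zVar (k := k) n 0} ∪ Set.range fun j : Fin n => uVar n j) ⊓
      Ideal.span ({zVar (k := k) n 1} ∪ Set.range fun i : Fin n => wVar n i) ⊓
      Ideal.span ((Set.range fun i : Fin n => wVar (k := k) n i) ∪
        Set.range fun j : Fin n => uVar n j) := by
  classical
  set σ := (Fin 2 ⊕ (Fin n ⊕ Fin n))
  have hmul : ∀ (a b : σ),
      (X a * X b : MvPolynomial σ k) =
        monomial (Finsupp.single a 1 + Finsupp.single b 1) 1 := by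
    intro a b
    rw [X, X, monomial_mul, one_mul]
  set S : Set (σ →₀ ℕ) :=
      (Set.range fun i : Fin n => Finsupp.single (Sum.inl 0 : σ) 1
          + Finsupp.single (Sum.inr (Sum.inl i) : σ) 1) ∪
      (Set.range fun j : Fin n => Finsupp.single (Sum.inl 1 : σ) 1
          + Finsupp.single (Sum.inr (Sum.inr j) : σ) 1) with hS
  have hset : ((Set.range fun i : Fin n => zVar (k := k) n 0 * wVar n i) ∪
      (Set.range fun j : Fin n => zVar (k := k) n 1 * uVar n j)) =
      (fun s => monomial s (1 : k)) '' S := by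
    rw [hS, Set.image_union, ← Set.range_comp, ← Set.range_comp]
    congr 1 <;> ext p <;> simp [zVar, wVar, uVar, Function.comp_def, hmul]
  have h1 : ({zVar (k := k) n 0, zVar n 1} : Set (MvPolynomial σ k)) =
      X '' {Sum.inl 0, Sum.inl 1} := by
    simp [zVar, Set.image_insert_eq]
  have h2 : ({zVar (k := k) n 0} ∪ Set.range fun j : Fin n => uVar n j) =
      X '' ({Sum.inl 0} ∪ Set.range fun j : Fin n => (Sum.inr (Sum.inr j) : σ)) := by
    rw [Set.image_union, ← Set.range_comp]
    simp [zVar, uVar, Function.comp_def]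
  have h3 : ({zVar (k := k) n 1} ∪ Set.range fun i : Fin n => wVar n i) =
      X '' ({Sum.inl 1} ∪ Set.range fun i : Fin n => (Sum.inr (Sum.inl i) : σ)) := by
    rw [Set.image_union, ← Set.range_comp]
    simp [zVar, wVar, Function.comp_def]
  have h4 : ((Set.range fun i : Fin n => wVar (k := k) n i) ∪
      Set.range fun j : Fin n => uVar n j) =
      X '' ((Set.range fun i : Fin n => (Sum.inr (Sum.inl i) : σ)) ∪
        Set.range fun j : Fin n => (Sum.inr (Sum.inr j) : σ)) := by
    rw [Set.image_union, ← Set.range_comp, ← Set.range_comp]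
    simp [wVar, uVar, Function.comp_def]
  rw [hset, h1, h2, h3, h4]
  ext p
  simp only [Ideal.mem_inf, mem_ideal_span_monomial_image, mem_ideal_span_X_image]
  have key : ∀ m : σ →₀ ℕ,
      ((∃ s ∈ S, s ≤ m) ↔
        ((∃ i ∈ ({Sum.inl 0, Sum.inl 1} : Set σ), m i ≠ 0) ∧
         (∃ i ∈ ({Sum.inl 0} ∪ Set.range fun j : Fin n => (Sum.inr (Sum.inr j) : σ)), m i ≠ 0) ∧
         (∃ i ∈ ({Sum.inl 1} ∪ Set.range fun i : Fin n => (Sum.inr (Sum.inl i) : σ)), m i ≠ 0) ∧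
         (∃ i ∈ ((Set.range fun i : Fin n => (Sum.inr (Sum.inl i) : σ)) ∪
            Set.range fun j : Fin n => (Sum.inr (Sum.inr j) : σ)), m i ≠ 0))) := by
    intro m
    have pick : ∀ (i : Fin n), m (Sum.inl 0) ≠ 0 → m (Sum.inr (Sum.inl i)) ≠ 0 →
        ∃ s ∈ S, s ≤ m :=
      fun i h1 h2 => ⟨_, Set.mem_union_left _ ⟨i, rfl⟩,
        (pair_le_iff (by simp) m).2 ⟨h1, h2⟩⟩
    have pick' : ∀ (j : Fin n), m (Sum.inl 1) ≠ 0 → m (Sum.inr (Sum.inr j)) ≠ 0 →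
        ∃ s ∈ S, s ≤ m :=
      fun j h1 h2 => ⟨_, Set.mem_union_right _ ⟨j, rfl⟩,
        (pair_le_iff (by simp) m).2 ⟨h1, h2⟩⟩
    constructor
    · rintro ⟨s, hs, hle⟩
      simp only [hS, Set.mem_union, Set.mem_range] at hs
      rcases hs with ⟨i, rfl⟩ | ⟨j, rfl⟩
      · rw [pair_le_iff (by simp) m] at hle
        exact ⟨⟨_, by simp, hle.1⟩, ⟨_, by simp, hle.1⟩,
          ⟨_, Set.mem_union_right _ ⟨i, rfl⟩, hle.2⟩,
          ⟨_, Set.mem_union_left _ ⟨i, rfl⟩, hle.2⟩⟩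
      · rw [pair_le_iff (by simp) m] at hle
        exact ⟨⟨_, by simp, hle.1⟩, ⟨_, Set.mem_union_right _ ⟨j, rfl⟩, hle.2⟩,
          ⟨_, by simp, hle.1⟩, ⟨_, Set.mem_union_right _ ⟨j, rfl⟩, hle.2⟩⟩
    · rintro ⟨⟨a, ha, hma⟩, ⟨b, hb, hmb⟩, ⟨c, hc, hmc⟩, ⟨d, hd, hmd⟩⟩
      simp only [Set.mem_insert_iff, Set.mem_singleton_iff, Set.mem_union,
        Set.mem_range] at ha hb hc hd
      rcases ha with rfl | rfl
      · rcases hc with rfl | ⟨i, rfl⟩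
        · rcases hd with ⟨i, rfl⟩ | ⟨j, rfl⟩
          · exact pick i hma hmd
          · exact pick' j hmc hmd
        · exact pick i hma hmc
      · rcases hb with rfl | ⟨j, rfl⟩
        · rcases hd with ⟨i, rfl⟩ | ⟨j, rfl⟩
          · exact pick i hmb hmd
          · exact pick' j hma hmd
        · exact pick' j hma hmb
  constructor
  · intro h
    exact ⟨⟨⟨fun m hm => ((key m).1 (h m hm)).1, fun m hm => ((key m).1 (h m hm)).2.1⟩,
      fun m hm => ((key m).1 (h m hm)).2.2.1⟩, fun m hm => ((key m).1 (h m hm)).2.2.2⟩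
  · rintro ⟨⟨⟨hA, hB⟩, hC⟩, hD⟩ m hm
    exact (key m).2 ⟨hA m hm, hB m hm, hC m hm, hD m hm⟩
end

section
/- Let R be a commutative ring, m ≥ 2, and let Φ be a 2 × m matrix over R whose j-th column equals d_j · c_j, where d_j ∈ R and c_j ∈ R² for j = 1, …, m. Assume: d₁ divides d₂; d₂ divides d_j for every j ≥ 3; and the 2 × 2 matrix with columns c₁ and c₂ is invertible over R. Then Φ is diagonalizable: there exist an invertible 2 × 2 matrix Q and an invertible m × m matrix P over R such that Q · Φ · P is the 2 × m block matrix [diag(d₁, d₂) | 0]. -/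
/-!
Let `C` be the matrix with columns `c₀, c₁`. After multiplying by `Q = C⁻¹` the first two columns
of `Φ` become `d₀ e₀` and `d₁ e₁`, and every other column is `d_j` times some vector. Since `d₀` and
`d₁` both divide `d_j`, that column is a combination of the first two, so column operations clear
it. These operations form `1 - X` with `X` mapping pivot columns to non-pivot columns only, so
`X² = 0` and `1 - X` is invertible.
-/

theorem Submodule.exists_fun_of_mem_span_image {α R M : Type*} [Semiring R] [AddCommMonoid M]
    [Module R M] [Fintype α] {v : α → M} {s : Set α} {x : M} (hx : x ∈ span R (v '' s)) :
    ∃ g : α → R, (∀ k ∉ s, g k = 0) ∧ ∑ k, g k • v k = x := by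
  obtain ⟨l, hl, rfl⟩ := (Finsupp.mem_span_image_iff_linearCombination R).mp hx
  refine ⟨l, fun k hk => Finsupp.notMem_support_iff.mp fun hk' => hk (hl hk'), ?_⟩
  rw [Finsupp.linearCombination_apply, Finsupp.sum_fintype _ _ fun k => zero_smul R (v k)]

theorem smul_mem_span_range_smul_single {n R : Type*} [CommSemiring R] [Fintype n] [DecidableEq n]
    (a : n → R) {x : R} (hx : ∀ i, a i ∣ x) (v : n → R) :
    x • v ∈ Submodule.span R (Set.range fun i => a i • Pi.single i (1 : R)) := by
  rw [← Finset.univ_sum_single v, Finset.smul_sum]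
  refine Submodule.sum_mem _ fun i _ => ?_
  obtain ⟨b, hb⟩ := hx i
  have hxi : x • Pi.single i (v i) = (b * v i) • a i • Pi.single i (1 : R) := by
    ext k
    rcases eq_or_ne k i with rfl | hk
    · simp only [Pi.smul_apply, Pi.single_eq_same, smul_eq_mul, hb]
      ring
    · simp [hk]
  exact hxi ▸ Submodule.smul_mem _ _ (Submodule.subset_span ⟨i, rfl⟩)

open scoped Matrix

namespace Matrix

theorem col_mul_eq_smul_mulVec {ι κ μ R : Type*} [CommSemiring R] [Fintype κ]
    (M : Matrix ι κ R) {Φ : Matrix κ μ R} {d : μ → R} {c : μ → κ → R}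
    (hΦ : ∀ i j, Φ i j = d j * c j i) (j : μ) : (M * Φ).col j = d j • (M *ᵥ c j) := by
  ext i
  simp only [col_apply, mul_apply, hΦ, Pi.smul_apply, mulVec, dotProduct, smul_eq_mul,
    Finset.mul_sum]
  exact Finset.sum_congr rfl fun k _ => by ring

theorem exists_isUnit_mul_eq_of_col_mem_span {ι κ R : Type*} [CommRing R] [Fintype κ]
    [DecidableEq κ] (A : Matrix ι κ R) (p : κ → Prop) [DecidablePred p]
    (h : ∀ j, ¬ p j → A.col j ∈ Submodule.span R (A.col '' {k | p k})) :
    ∃ P : Matrix κ κ R, IsUnit P ∧ A * P = of fun i j => if p j then A i j else 0 := by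
  have hcoeff : ∀ j, ∃ g : κ → R,
      (∀ k, ¬ p k → g k = 0) ∧ (¬ p j → ∑ k, g k • A.col k = A.col j) := by
    intro j
    by_cases hj : p j
    · exact ⟨0, fun _ _ => rfl, absurd hj⟩
    · obtain ⟨g, hg0, hg⟩ := Submodule.exists_fun_of_mem_span_image (h j hj)
      exact ⟨g, hg0, fun _ => hg⟩
  choose g hg0 hg using hcoeff
  set X : Matrix κ κ R := of fun k j => if p j then 0 else g j k
  have hX : X * X = 0 := by
    ext k j
    refine Finset.sum_eq_zero fun l _ => ?_
    by_cases hl : p l <;> simp [X, hl, hg0]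
  refine ⟨1 - X, IsNilpotent.isUnit_one_sub ⟨2, by rw [sq, hX]⟩, ?_⟩
  ext i j
  rw [Matrix.mul_sub, Matrix.mul_one, sub_apply, mul_apply]
  by_cases hj : p j
  · simp [X, hj]
  · have hcol : ∑ k, A i k * g j k = A i j := by
      simpa [Finset.sum_apply, mul_comm] using congrFun (hg j hj) i
    simp [X, hj, hcol]

end Matrix

/-- Let `R` be a commutative ring, `m ≥ 2`, and let `Φ` be a
`2 × m` matrix whose `j`-th column is `d j • c j`.  Assume `d₁ ∣ d₂`, `d₂ ∣ d j`
for `j ≥ 3`, and that the `2 × 2` matrix with columns `c₁, c₂` is invertible.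
Then `Φ` is diagonalizable: there are invertible matrices `Q` (2 × 2) and
`P` (m × m) with `Q * Φ * P = [diag(d₁, d₂) | 0]`. -/
theorem structural_hom_diagonalizable {R : Type*} [CommRing R] (m : ℕ) (hm : 2 ≤ m)
    (Φ : Matrix (Fin 2) (Fin m) R) (d : Fin m → R) (c : Fin m → Fin 2 → R)
    (hΦ : ∀ (i : Fin 2) (j : Fin m), Φ i j = d j * c j i)
    (h12 : d ⟨0, by omega⟩ ∣ d ⟨1, by omega⟩)
    (h2j : ∀ j : Fin m, 2 ≤ (j : ℕ) → d ⟨1, by omega⟩ ∣ d j)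
    (hC : IsUnit (Matrix.of fun i s : Fin 2 => c ⟨(s : ℕ), by omega⟩ i)) :
    ∃ (Q : Matrix (Fin 2) (Fin 2) R) (P : Matrix (Fin m) (Fin m) R),
      IsUnit Q ∧ IsUnit P ∧
      Q * Φ * P = Matrix.of fun (i : Fin 2) (j : Fin m) =>
        if (j : ℕ) = (i : ℕ) then d j else 0 := by
  obtain ⟨C, hC⟩ := hC
  set B := (↑C⁻¹ : Matrix (Fin 2) (Fin 2) R) * Φ
  have hB : ∀ j, B.col j = d j • (↑C⁻¹ *ᵥ c j) := Matrix.col_mul_eq_smul_mulVec _ hΦ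
  have hBpivot : ∀ (j : Fin m) (hj : (j : ℕ) < 2), B.col j = d j • Pi.single ⟨j, hj⟩ 1 := by
    intro j hj
    have hcj : c j = (C : Matrix (Fin 2) (Fin 2) R) *ᵥ Pi.single ⟨j, hj⟩ 1 := by
      rw [Matrix.mulVec_single_one, hC]; rfl
    rw [hB, hcj, Matrix.mulVec_mulVec, Units.inv_mul, Matrix.one_mulVec]
  have hspan : ∀ j : Fin m, ¬ (j : ℕ) < 2 →
      B.col j ∈ Submodule.span R (B.col '' {k | (k : ℕ) < 2}) := by
    intro j hj
    refine Submodule.span_mono ?_ (hB j ▸ smul_mem_span_range_smul_single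
      (fun s : Fin 2 => d ⟨s, by omega⟩) (fun s => ?_) _)
    · rintro _ ⟨s, rfl⟩
      exact ⟨⟨s, by omega⟩, s.isLt, hBpivot _ s.isLt⟩
    · fin_cases s
      exacts [h12.trans (h2j j (by omega)), h2j j (by omega)]
  obtain ⟨P, hP, hBP⟩ := B.exists_isUnit_mul_eq_of_col_mem_span (fun k => (k : ℕ) < 2) hspan
  refine ⟨_, P, C⁻¹.isUnit, hP, hBP.trans ?_⟩
  ext i j
  by_cases hj : (j : ℕ) < 2
  · rw [Matrix.of_apply, Matrix.of_apply, if_pos hj]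
    simpa [Pi.single_apply, Fin.ext_iff, eq_comm] using congrFun (hBpivot j hj) i
  · rw [Matrix.of_apply, Matrix.of_apply, if_neg hj, if_neg (by omega)]
end
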